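/- arXiv:1604.07133 — 2 statements merged into one kernel-verified Lean document; each statement's English description precedes it below -/
import Mathlib

section
/- For a prime power q = p^n > 2, the commuting graph of GL(2, q) is isomorphic to (q(q+1)/2)·K_{q^2 - 3q + 2} ⊔ (q(q-1)/2)·K_{q^2 - q} ⊔ (q+1)·K_{q^2 - 2q + 1}. -/
open Polynomial

/-- The commuting graph of a group: vertices are non-central elements,
adjacent iff distinct and commuting. -/
def commGraph (G : Type*) [Group G] : SimpleGraph {x : G // x ∉ Subgroup.center G} where
  Adj x y := x ≠ y ∧ (x : G) * y = y * x
  symm := ⟨by rintro x y ⟨h1, h2⟩; exact ⟨h1.symm, h2.symm⟩⟩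
  loopless := ⟨by rintro x ⟨h, _⟩; exact h rfl⟩

/-- The characteristic polynomial (over ℝ) of the adjacency matrix of the
commuting graph of a finite group. -/
noncomputable def commCharpoly (G : Type*) [Group G] [Finite G] : Polynomial ℝ := by
  classical
  have : Fintype G := Fintype.ofFinite G
  exact (SimpleGraph.adjMatrix ℝ (commGraph G)).charpoly

/-- The disjoint union of `k` copies of the complete graph on `m` vertices. -/
def completeUnion (k m : ℕ) : SimpleGraph (Fin k × Fin m) where
  Adj x y := x ≠ y ∧ x.1 = y.1
  symm := ⟨by rintro x y ⟨h1, h2⟩; exact ⟨h1.symm, h2.symm⟩⟩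
  loopless := ⟨by rintro x ⟨h, _⟩; exact h rfl⟩

/-!
Two non-scalar `2 × 2` matrices `M` and `A` commute only if `A = a • 1 + b • M`, so commuting
is an equivalence relation on the non-central elements of `GL(2, q)`, and the commuting graph is
the disjoint union of the cliques on its classes `F[M]ˣ \ Fˣ`. Writing `A = b • (M - t • 1)`, the
class of `M` has `(q - r) (q - 1)` elements, where `r ∈ {0, 1, 2}` is the number of eigenvalues
of `M` in `F`, and `r` is the same for all members of a class. The number of classes with a given
`r` comes from double counting: fixing `c ∉ {0, 1}`, the `q² + q` matrices with eigenvalues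
`1, c` lie two in each class with `r = 2`, the `q² - 1` non-identity matrices with the double
eigenvalue `1` lie `q - 1` in each class with `r = 1`, and the classes with `r = 0` make up the
rest of the `(q² - 1)(q² - q) - (q - 1)` vertices.
-/

open Matrix

namespace SimpleGraph

variable {V W L L' : Type*}

def IsClusteredBy (G : SimpleGraph V) (f : V → L) : Prop :=
  ∀ x y, G.Adj x y ↔ x ≠ y ∧ f x = f y

variable {G : SimpleGraph V} {H : SimpleGraph W} {f : V → L}

theorem IsClusteredBy.sum {g : W → L'} (hG : G.IsClusteredBy f) (hH : H.IsClusteredBy g) :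
    (G ⊕g H).IsClusteredBy (Sum.map f g) := by
  rintro (x | x) (y | y)
  · simpa using hG x y
  · simp
  · simp
  · simpa using hH x y

theorem IsClusteredBy.comp_equiv (hG : G.IsClusteredBy f) (e : L ≃ L') :
    G.IsClusteredBy (e ∘ f) := by
  intro x y
  rw [hG, Function.comp_apply, Function.comp_apply, e.apply_eq_iff_eq]

theorem IsClusteredBy.nonempty_iso [Fintype V] [Fintype W] [DecidableEq L] {g : W → L}
    (hG : G.IsClusteredBy f) (hH : H.IsClusteredBy g)
    (hcard : ∀ l, Fintype.card {v // f v = l} = Fintype.card {w // g w = l}) :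
    Nonempty (G ≃g H) := by
  let e : V ≃ W := Equiv.ofFiberEquiv fun l => Fintype.equivOfCardEq (hcard l)
  have he : ∀ v, g (e v) = f v := Equiv.ofFiberEquiv_map _
  exact ⟨⟨e, fun {x y} => by rw [hH, hG, he, he, e.injective.ne_iff]⟩⟩

end SimpleGraph

theorem completeUnion_isClusteredBy (k m : ℕ) :
    (completeUnion k m).IsClusteredBy Prod.fst := fun _ _ => Iff.rfl

namespace Fintype

variable {α β γ δ : Type*} [Fintype α]

theorem card_fiber_sumMap_inl [Fintype β] [DecidableEq γ] [DecidableEq δ] (f : α → γ)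
    (g : β → δ) (c : γ) :
    Fintype.card {x // Sum.map f g x = Sum.inl c} = Fintype.card {a // f a = c} := by
  simp only [Fintype.card_subtype, Finset.card_filter, Fintype.sum_sum_type]
  simp

theorem card_fiber_sumMap_inr [Fintype β] [DecidableEq γ] [DecidableEq δ] (f : α → γ)
    (g : β → δ) (d : δ) :
    Fintype.card {x // Sum.map f g x = Sum.inr d} = Fintype.card {b // g b = d} := by
  simp only [Fintype.card_subtype, Finset.card_filter, Fintype.sum_sum_type]
  simp

theorem card_fiber_fst [Fintype β] [DecidableEq α] (a : α) :
    Fintype.card {x : α × β // x.1 = a} = Fintype.card β := by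
  simp only [Fintype.card_subtype, Finset.card_filter, Fintype.sum_prod_type]
  simp [apply_ite Finset.card]

theorem card_fiber_equiv_comp [DecidableEq β] [DecidableEq γ]
    (f : α → β) (e : β ≃ γ) (c : γ) :
    Fintype.card {a // (e ∘ f) a = c} = Fintype.card {a // f a = e.symm c} :=
  Fintype.card_congr <| Equiv.subtypeEquivRight fun _ => e.eq_symm_apply.symm

theorem card_eq_sum_card_fiber [Fintype β] [DecidableEq β]
    (f : α → β) : Fintype.card α = ∑ b, Fintype.card {a // f a = b} := by
  rw [← Fintype.card_sigma, Fintype.card_congr (Equiv.sigmaFiberEquiv f)]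

theorem card_subtype_eq_sum_card_fiber [Fintype β] [DecidableEq β]
    (f : α → β) (P : α → Prop) [DecidablePred P] :
    Fintype.card {a // P a} = ∑ b, Fintype.card {a // f a = b ∧ P a} := by
  simp only [Fintype.card_subtype]
  rw [Finset.card_eq_sum_card_fiberwise (f := f) (t := Finset.univ) fun _ _ => Finset.mem_univ _]
  simp only [Finset.filter_filter, and_comm]

end Fintype

section LeTwo

variable {Q : Type*} (κ : Q → ℕ) (hκ : ∀ c, κ c ≤ 2)

def equivSumOfLeTwo : Q ≃ ({c // κ c = 2} ⊕ {c // κ c = 0}) ⊕ {c // κ c = 1} :=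
  (Equiv.subtypeUnivEquiv fun c =>
      show (κ c = 2 ∨ κ c = 0) ∨ κ c = 1 by have := hκ c; omega).symm.trans <|
    (subtypeOrEquiv _ _ <| Pi.disjoint_iff.2 fun _ =>
      disjoint_iff_inf_le.2 fun ⟨h₁, h₂⟩ => by omega).trans <|
    Equiv.sumCongr (subtypeOrEquiv _ _ <| Pi.disjoint_iff.2 fun _ =>
      disjoint_iff_inf_le.2 fun ⟨h₁, h₂⟩ => by omega) (Equiv.refl _)

@[simp]
theorem equivSumOfLeTwo_symm_inl_inl (c : {c // κ c = 2}) :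
    (equivSumOfLeTwo κ hκ).symm (Sum.inl (Sum.inl c)) = c := by
  simp [equivSumOfLeTwo, subtypeOrEquiv_symm_inl]

@[simp]
theorem equivSumOfLeTwo_symm_inl_inr (c : {c // κ c = 0}) :
    (equivSumOfLeTwo κ hκ).symm (Sum.inl (Sum.inr c)) = c := by
  simp [equivSumOfLeTwo, subtypeOrEquiv_symm_inl, subtypeOrEquiv_symm_inr]

@[simp]
theorem equivSumOfLeTwo_symm_inr (c : {c // κ c = 1}) :
    (equivSumOfLeTwo κ hκ).symm (Sum.inr c) = c := by
  simp [equivSumOfLeTwo, subtypeOrEquiv_symm_inr]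

end LeTwo

section TwoByTwo

variable {R : Type*} [CommRing R]

theorem trace_smul_one_add_smul (a b : R) (M : Matrix (Fin 2) (Fin 2) R) :
    (a • 1 + b • M).trace = 2 * a + b * M.trace := by
  rw [trace_fin_two, trace_fin_two]
  simp only [Matrix.add_apply, Matrix.smul_apply, one_apply_eq, smul_eq_mul, mul_one]
  ring

theorem det_smul_one_add_smul (a b : R) (M : Matrix (Fin 2) (Fin 2) R) :
    (a • 1 + b • M).det = a ^ 2 + a * b * M.trace + b ^ 2 * M.det := by
  rw [det_fin_two, det_fin_two, trace_fin_two]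
  simp only [Matrix.add_apply, Matrix.smul_apply, smul_eq_mul, one_apply_eq,
    one_apply_ne zero_ne_one, one_apply_ne one_ne_zero, mul_one, mul_zero, zero_add]
  ring

theorem trace_det_smul_one (c : R) :
    (c • 1 : Matrix (Fin 2) (Fin 2) R).trace = c + c ∧
      (c • 1 : Matrix (Fin 2) (Fin 2) R).det = c * c := by
  rw [trace_fin_two, det_fin_two]
  simp

theorem commute_smul_one_add_smul (M : Matrix (Fin 2) (Fin 2) R) (a b : R) :
    Commute M (a • 1 + b • M) :=
  ((Commute.one_right M).smul_right a).add_right ((Commute.refl M).smul_right b)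

theorem add_eq_add_and_mul_eq_mul_iff [NoZeroDivisors R] {a b u v : R} :
    a + b = u + v ∧ a * b = u * v ↔ (a = u ∧ b = v) ∨ (a = v ∧ b = u) := by
  constructor
  · rintro ⟨hs, hp⟩
    have h : (a - u) * (a - v) = 0 := by linear_combination a * hs - hp
    rcases mul_eq_zero.1 h with h | h
    · exact Or.inl ⟨sub_eq_zero.1 h, by linear_combination hs - h⟩
    · exact Or.inr ⟨sub_eq_zero.1 h, by linear_combination hs - h⟩
  · rintro (⟨rfl, rfl⟩ | ⟨rfl, rfl⟩)
    · exact ⟨rfl, rfl⟩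
    · exact ⟨add_comm _ _, mul_comm _ _⟩

theorem trace_det_smul_one_add_smul {M : Matrix (Fin 2) (Fin 2) R} {l m : R}
    (hs : M.trace = l + m) (hd : M.det = l * m) (a b : R) :
    (a • 1 + b • M).trace = (a + b * l) + (a + b * m) ∧
      (a • 1 + b • M).det = (a + b * l) * (a + b * m) := by
  rw [trace_smul_one_add_smul, det_smul_one_add_smul, hs, hd]
  constructor <;> ring

variable {F : Type*} [Field F] {M A B : Matrix (Fin 2) (Fin 2) F}

theorem linearIndependent_one_iff_notMem_range_scalar :
    LinearIndependent F ![1, M] ↔ M ∉ Set.range (scalar (Fin 2)) := by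
  rw [LinearIndependent.pair_iff' one_ne_zero]
  simp [scalar_apply, smul_one_eq_diagonal]

theorem exists_eq_smul_one_add_smul_of_commute (hM : LinearIndependent F ![1, M])
    (h : Commute A M) : ∃ a b : F, A = a • 1 + b • M := by
  have e₀₀ := congrFun (congrFun h 0) 0
  have e₀₁ := congrFun (congrFun h 0) 1
  have e₁₀ := congrFun (congrFun h 1) 0
  simp only [mul_apply, Fin.sum_univ_two] at e₀₀ e₀₁ e₁₀
  -- these say that `(A 0 1, A 1 0, A 0 0 - A 1 1)` is a multiple of
  -- `(M 0 1, M 1 0, M 0 0 - M 1 1)`, which is nonzero as `M` is not scalar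
  obtain ⟨k, h₀₁, h₁₀, hdiag⟩ : ∃ k : F, A 0 1 = k * M 0 1 ∧ A 1 0 = k * M 1 0 ∧
      A 0 0 - A 1 1 = k * (M 0 0 - M 1 1) := by
    by_cases hβ : M 0 1 = 0
    · by_cases hγ : M 1 0 = 0
      · have hαδ : M 0 0 - M 1 1 ≠ 0 := by
          intro hαδ
          refine (LinearIndependent.pair_iff' one_ne_zero).1 hM (M 0 0) ?_
          ext i j
          fin_cases i <;> fin_cases j <;> simp [hβ, hγ, sub_eq_zero.1 hαδ]
        refine ⟨(A 0 0 - A 1 1) / (M 0 0 - M 1 1), ?_, ?_, by field_simp⟩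
        · rw [hβ, mul_zero]
          have h₀₁ : A 0 1 * (M 0 0 - M 1 1) = 0 := by
            linear_combination (-1 : F) * e₀₁ + (A 0 0 - A 1 1) * hβ
          simpa [hαδ] using h₀₁
        · rw [hγ, mul_zero]
          have h₁₀ : A 1 0 * (M 0 0 - M 1 1) = 0 := by
            linear_combination e₁₀ + (A 0 0 - A 1 1) * hγ
          simpa [hαδ] using h₁₀
      · refine ⟨A 1 0 / M 1 0, ?_, by field_simp, ?_⟩
        · field_simp
          linear_combination e₀₀
        · field_simp
          linear_combination -e₁₀
    · refine ⟨A 0 1 / M 0 1, by field_simp, ?_, ?_⟩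
      · field_simp
        linear_combination -e₀₀
      · field_simp
        linear_combination e₀₁
  refine ⟨A 0 0 - k * M 0 0, k, ?_⟩
  ext i j
  fin_cases i <;> fin_cases j
  · simp
  · simpa using h₀₁
  · simpa using h₁₀
  · simp only [Fin.mk_one, Fin.isValue, Matrix.add_apply, Matrix.smul_apply, one_apply_eq,
      smul_eq_mul, mul_one]
    linear_combination -hdiag

theorem Commute.trans_of_linearIndependent_one (hM : LinearIndependent F ![1, M])
    (hA : Commute A M) (hB : Commute M B) : Commute A B := by
  obtain ⟨a, b, rfl⟩ := exists_eq_smul_one_add_smul_of_commute hM hA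
  obtain ⟨c, d, rfl⟩ := exists_eq_smul_one_add_smul_of_commute hM hB.symm
  exact ((Commute.one_right _).smul_right c).add_right
    ((commute_smul_one_add_smul M a b).symm.smul_right d)

theorem linearIndependent_one_smul_one_add_smul (hM : LinearIndependent F ![1, M]) (a : F) {b : F}
    (hb : b ≠ 0) : LinearIndependent F ![1, a • 1 + b • M] := by
  refine (LinearIndependent.pair_iff' one_ne_zero).2 fun c hc => hb ?_
  exact (hM.eq_of_pair (s := c) (t := 0) (by simpa using hc)).2.symm

end TwoByTwo

section FiniteField

variable {F : Type*} [Field F] [Fintype F] [DecidableEq F]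

def quadRoots (s d : F) : Finset F := {t | t ^ 2 - s * t + d = 0}

@[simp]
theorem mem_quadRoots {s d t : F} : t ∈ quadRoots s d ↔ t ^ 2 - s * t + d = 0 := by
  simp [quadRoots]

theorem quadRoots_add_mul (u v : F) : quadRoots (u + v) (u * v) = {u, v} := by
  ext t
  rw [mem_quadRoots, show t ^ 2 - (u + v) * t + u * v = (t - u) * (t - v) by ring]
  simp [sub_eq_zero]

theorem eq_add_mul_of_mem_quadRoots {s d t : F} (ht : t ∈ quadRoots s d) :
    s = t + (s - t) ∧ d = t * (s - t) := by
  rw [mem_quadRoots] at ht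
  exact ⟨by ring, by linear_combination ht⟩

theorem card_quadRoots_le_two (s d : F) : (quadRoots s d).card ≤ 2 := by
  obtain h | ⟨t, ht⟩ := (quadRoots s d).eq_empty_or_nonempty
  · simp [h]
  obtain ⟨hs, hd⟩ := eq_add_mul_of_mem_quadRoots ht
  rw [hs, hd, quadRoots_add_mul]
  exact Finset.card_le_two

theorem card_quadRoots_affine (s d a : F) {b : F} (hb : b ≠ 0) :
    (quadRoots (2 * a + b * s) (a ^ 2 + a * b * s + b ^ 2 * d)).card = (quadRoots s d).card := by
  symm
  refine Finset.card_nbij' (fun t => a + b * t) (fun u => (u - a) / b) ?_ ?_ ?_ ?_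
  · intro t ht
    simp only [Finset.mem_coe, mem_quadRoots] at ht ⊢
    linear_combination b ^ 2 * ht
  · intro u hu
    simp only [Finset.mem_coe, mem_quadRoots] at hu ⊢
    field_simp
    linear_combination hu
  · intro t _
    field_simp
    ring
  · intro u _
    field_simp
    ring

theorem card_mul_eq_const (e : F) : Fintype.card {p : F × F // p.1 * p.2 = e} =
    Fintype.card F - 1 + if e = 0 then Fintype.card F else 0 := by
  have inner : ∀ y : F, (∑ z : F, if y * z = e then 1 else 0) =
      if y = 0 then (if e = 0 then Fintype.card F else 0) else 1 := by
    intro y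
    split_ifs with hy he
    · simp [hy, he]
    · simp [hy, Ne.symm he]
    · have hz : ∀ z, y * z = e ↔ z = e / y := fun z => by rw [eq_div_iff hy, mul_comm]
      simp [hz]
  rw [Fintype.card_subtype, Finset.card_filter, Fintype.sum_prod_type]
  simp only [inner]
  rw [Finset.sum_ite, Finset.filter_eq', Finset.filter_ne']
  simp [Finset.card_univ, add_comm]

def traceDetEquiv (s d : F) :
    {N : Matrix (Fin 2) (Fin 2) F // N.trace = s ∧ N.det = d} ≃
      Σ x : F, {p : F × F // p.1 * p.2 = x * (s - x) - d} where
  toFun N := ⟨N.1 0 0, (N.1 0 1, N.1 1 0), by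
    obtain ⟨ht, hd⟩ := N.2
    rw [trace_fin_two] at ht
    rw [det_fin_two] at hd
    linear_combination -hd + N.1 0 0 * ht⟩
  invFun z := ⟨!![z.1, z.2.1.1; z.2.1.2, s - z.1], by simp [trace_fin_two], by
    rw [det_fin_two_of]
    linear_combination -z.2.2⟩
  left_inv N := by
    obtain ⟨N, ht, -⟩ := N
    rw [trace_fin_two] at ht
    ext i j
    fin_cases i <;> fin_cases j <;> simp [← ht]
  right_inv z := rfl

theorem card_trace_det_eq (s d : F) :
    Fintype.card {N : Matrix (Fin 2) (Fin 2) F // N.trace = s ∧ N.det = d} =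
      Fintype.card F * (Fintype.card F - 1) + Fintype.card F * (quadRoots s d).card := by
  have hroot : ∀ x : F, x * (s - x) - d = 0 ↔ x ∈ quadRoots s d := by
    intro x
    rw [mem_quadRoots, ← neg_eq_zero]
    ring_nf
  rw [Fintype.card_congr (traceDetEquiv s d), Fintype.card_sigma]
  simp only [card_mul_eq_const, hroot]
  rw [Finset.sum_add_distrib, Finset.sum_ite_mem]
  simp [mul_comm]

def eigenvalueCount (M : Matrix (Fin 2) (Fin 2) F) : ℕ := (quadRoots M.trace M.det).card

theorem eigenvalueCount_of_trace_det {M : Matrix (Fin 2) (Fin 2) F} {u v : F}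
    (hs : M.trace = u + v) (hd : M.det = u * v) : eigenvalueCount M = ({u, v} : Finset F).card := by
  rw [eigenvalueCount, hs, hd, quadRoots_add_mul]

theorem exists_trace_det_of_eigenvalueCount_pos {M : Matrix (Fin 2) (Fin 2) F}
    (h : 0 < eigenvalueCount M) : ∃ u v : F, M.trace = u + v ∧ M.det = u * v := by
  obtain ⟨u, hu⟩ := Finset.card_pos.1 h
  exact ⟨u, _, eq_add_mul_of_mem_quadRoots hu⟩

theorem eq_of_smul_one_trace_det {c u v : F}
    (hs : (c • 1 : Matrix (Fin 2) (Fin 2) F).trace = u + v)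
    (hd : (c • 1 : Matrix (Fin 2) (Fin 2) F).det = u * v) : u = c ∧ v = c := by
  have h : quadRoots (u + v) (u * v) = quadRoots (c + c) (c * c) := by
    rw [← hs, ← hd, (trace_det_smul_one c).1, (trace_det_smul_one c).2]
  rw [quadRoots_add_mul, quadRoots_add_mul,
    Finset.insert_eq_of_mem (Finset.mem_singleton_self c)] at h
  exact ⟨Finset.mem_singleton.1 (h ▸ Finset.mem_insert_self u {v}),
    Finset.mem_singleton.1 (h ▸ Finset.mem_insert_of_mem (Finset.mem_singleton_self v))⟩

theorem eigenvalueCount_eq_of_commute {M A : Matrix (Fin 2) (Fin 2) F}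
    (hM : LinearIndependent F ![1, M]) (hA : LinearIndependent F ![1, A]) (h : Commute A M) :
    eigenvalueCount A = eigenvalueCount M := by
  obtain ⟨a, b, rfl⟩ := exists_eq_smul_one_add_smul_of_commute hM h
  have hb : b ≠ 0 := by
    rintro rfl
    exact (LinearIndependent.pair_iff' one_ne_zero).1 hA a (by simp)
  rw [eigenvalueCount, trace_smul_one_add_smul, det_smul_one_add_smul,
    card_quadRoots_affine _ _ _ hb, eigenvalueCount]

theorem card_smul_one_add_smul_det_ne_zero (M : Matrix (Fin 2) (Fin 2) F) :
    Fintype.card {p : F × F // p.2 ≠ 0 ∧ (p.1 • 1 + p.2 • M).det ≠ 0} =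
      (Fintype.card F - eigenvalueCount M) * (Fintype.card F - 1) := by
  have hdet : ∀ t b : F,
      ((-(b * t)) • 1 + b • M).det = b ^ 2 * (t ^ 2 - M.trace * t + M.det) :=
    fun t b => by rw [det_smul_one_add_smul]; ring
  let e : {t : F // t ∉ quadRoots M.trace M.det} × {b : F // b ≠ 0} ≃
      {p : F × F // p.2 ≠ 0 ∧ (p.1 • 1 + p.2 • M).det ≠ 0} :=
    { toFun z := ⟨(-(z.2.1 * z.1.1), z.2.1), z.2.2, by
        rw [hdet]
        exact mul_ne_zero (pow_ne_zero 2 z.2.2) (by simpa using z.1.2)⟩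
      invFun p := (⟨-(p.1.1 / p.1.2), fun ht => p.2.2 <| by
          rw [show p.1.1 = -(p.1.2 * -(p.1.1 / p.1.2)) by field_simp [p.2.1], hdet,
            (mem_quadRoots.1 ht), mul_zero]⟩, ⟨p.1.2, p.2.1⟩)
      left_inv z := by
        ext
        · field_simp [z.2.2]
        · rfl
      right_inv p := by
        ext
        · field_simp [p.2.1]
        · rfl }
  rw [← Fintype.card_congr e, Fintype.card_prod, Fintype.card_subtype_compl, Fintype.card_coe,
    ← Fintype.card_units, Fintype.card_congr unitsEquivNeZero, eigenvalueCount]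

theorem card_smul_one_add_smul_trace_det_of_ne {M : Matrix (Fin 2) (Fin 2) F} {l m u v : F}
    (hlm : l ≠ m) (hs : M.trace = l + m) (hd : M.det = l * m) (huv : u ≠ v) (hu : u ≠ 0)
    (hv : v ≠ 0) :
    Fintype.card {p : F × F // (p.2 ≠ 0 ∧ (p.1 • 1 + p.2 • M).det ≠ 0) ∧
      (p.1 • 1 + p.2 • M).trace = u + v ∧ (p.1 • 1 + p.2 • M).det = u * v} = 2 := by
  -- the eigenvalues of `a • 1 + b • M`
  let Φ : F × F → F × F := fun p => (p.1 + p.2 * l, p.1 + p.2 * m)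
  have hΦ : Function.Bijective Φ := by
    refine Finite.injective_iff_bijective.1 fun p p' h => ?_
    simp only [Φ, Prod.mk.injEq] at h
    have hb : p.2 = p'.2 := by
      have : (p.2 - p'.2) * (l - m) = 0 := by linear_combination h.1 - h.2
      simpa [sub_eq_zero, hlm] using this
    exact Prod.ext (by linear_combination h.1 - l * hb) hb
  have hcond : ∀ p : F × F, ((p.2 ≠ 0 ∧ (p.1 • 1 + p.2 • M).det ≠ 0) ∧
      (p.1 • 1 + p.2 • M).trace = u + v ∧ (p.1 • 1 + p.2 • M).det = u * v) ↔
        Φ p ∈ ({(u, v), (v, u)} : Finset (F × F)) := by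
    intro p
    obtain ⟨htr, hdt⟩ := trace_det_smul_one_add_smul hs hd p.1 p.2
    rw [htr, hdt, add_eq_add_and_mul_eq_mul_iff]
    simp only [Φ, Finset.mem_insert, Finset.mem_singleton, Prod.mk.injEq]
    refine ⟨fun h => h.2, fun h => ⟨⟨?_, ?_⟩, h⟩⟩
    · intro hb
      rcases h with ⟨h₁, h₂⟩ | ⟨h₁, h₂⟩ <;>
        rw [hb, zero_mul, add_zero] at h₁ h₂ <;> exact huv (by rw [← h₁, ← h₂])
    · rcases h with ⟨h₁, h₂⟩ | ⟨h₁, h₂⟩ <;> simp [h₁, h₂, hu, hv]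
  rw [Fintype.card_congr (Equiv.subtypeEquivRight hcond),
    Fintype.card_congr ((Equiv.ofBijective Φ hΦ).subtypeEquiv
      (p := fun p => Φ p ∈ ({(u, v), (v, u)} : Finset (F × F))) fun _ => Iff.rfl),
    Fintype.card_coe, Finset.card_pair]
  simp [huv]

theorem card_smul_one_add_smul_trace_det_of_eq {M : Matrix (Fin 2) (Fin 2) F} {l u : F}
    (hs : M.trace = l + l) (hd : M.det = l * l) (hu : u ≠ 0) :
    Fintype.card {p : F × F // (p.2 ≠ 0 ∧ (p.1 • 1 + p.2 • M).det ≠ 0) ∧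
      (p.1 • 1 + p.2 • M).trace = u + u ∧ (p.1 • 1 + p.2 • M).det = u * u} =
        Fintype.card F - 1 := by
  have hcond : ∀ p : F × F, ((p.2 ≠ 0 ∧ (p.1 • 1 + p.2 • M).det ≠ 0) ∧
      (p.1 • 1 + p.2 • M).trace = u + u ∧ (p.1 • 1 + p.2 • M).det = u * u) ↔
        p.2 ≠ 0 ∧ p.1 = u - p.2 * l := by
    intro p
    obtain ⟨htr, hdt⟩ := trace_det_smul_one_add_smul hs hd p.1 p.2
    rw [htr, hdt, add_eq_add_and_mul_eq_mul_iff, or_self, eq_sub_iff_add_eq]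
    constructor
    · rintro ⟨⟨hb, -⟩, h, -⟩
      exact ⟨hb, h⟩
    · rintro ⟨hb, h⟩
      simp [hb, h, hu]
  let e : {b : F // b ≠ 0} ≃ {p : F × F // p.2 ≠ 0 ∧ p.1 = u - p.2 * l} :=
    { toFun b := ⟨(u - b * l, b), b.2, rfl⟩
      invFun p := ⟨p.1.2, p.2.1⟩
      left_inv b := rfl
      right_inv p := Subtype.ext (Prod.ext p.2.2.symm rfl) }
  rw [Fintype.card_congr (Equiv.subtypeEquivRight hcond), ← Fintype.card_congr e,
    ← Fintype.card_units, Fintype.card_congr unitsEquivNeZero]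

theorem exists_ne_zero_ne_one (hq : 2 < Fintype.card F) : ∃ c : F, c ≠ 0 ∧ c ≠ 1 := by
  obtain ⟨c, -, hc⟩ := Finset.exists_mem_notMem_of_card_lt_card (s := {0, 1})
    (t := Finset.univ) (Finset.card_le_two.trans_lt hq)
  exact ⟨c, by simpa [not_or] using hc⟩

end FiniteField

section GeneralLinear

variable {F : Type*} [Field F]

theorem notMem_center_iff_linearIndependent (g : GL (Fin 2) F) :
    g ∉ Subgroup.center (GL (Fin 2) F) ↔ LinearIndependent F ![1, g.val] := by
  rw [linearIndependent_one_iff_notMem_range_scalar,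
    GeneralLinearGroup.mem_center_iff_val_mem_range_scalar]

theorem commute_iff_commute_val {x y : GL (Fin 2) F} : Commute x y ↔ Commute x.val y.val := by
  simp [Commute, SemiconjBy, Units.ext_iff]

variable (F) in
abbrev NoncentralGL₂ := {x : GL (Fin 2) F // x ∉ Subgroup.center (GL (Fin 2) F)}

theorem NoncentralGL₂.linearIndependent (x : NoncentralGL₂ F) :
    LinearIndependent F ![1, x.1.val] :=
  (notMem_center_iff_linearIndependent x.1).1 x.2

instance commuteSetoid (F : Type*) [Field F] : Setoid (NoncentralGL₂ F) where
  r x y := Commute x.1 y.1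
  iseqv := ⟨fun _ => Commute.refl _, Commute.symm, fun {_ y _} hxy hyz =>
    commute_iff_commute_val.2 <| (commute_iff_commute_val.1 hxy).trans_of_linearIndependent_one
      y.linearIndependent (commute_iff_commute_val.1 hyz)⟩

theorem commGraph_isClusteredBy :
    (commGraph (GL (Fin 2) F)).IsClusteredBy (Quotient.mk (commuteSetoid F)) :=
  fun _ _ => and_congr_right fun _ => (Quotient.eq (r := commuteSetoid F)).symm

noncomputable def commClassEquiv (x : NoncentralGL₂ F) :
    {p : F × F // p.2 ≠ 0 ∧ (p.1 • 1 + p.2 • x.1.val).det ≠ 0} ≃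
      {y : NoncentralGL₂ F // Commute x.1 y.1} := by
  refine Equiv.ofBijective (fun p => ⟨⟨GeneralLinearGroup.mkOfDetNeZero _ p.2.2,
    (notMem_center_iff_linearIndependent _).2 <|
      linearIndependent_one_smul_one_add_smul x.linearIndependent _ p.2.1⟩,
    commute_iff_commute_val.2 (commute_smul_one_add_smul _ _ _)⟩) ⟨?_, ?_⟩
  · intro p p' h
    have hval := congrArg (fun y : {y : NoncentralGL₂ F // Commute x.1 y.1} => y.1.1.val) h
    obtain ⟨h₁, h₂⟩ := x.linearIndependent.eq_of_pair hval
    exact Subtype.ext (Prod.ext h₁ h₂)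
  · rintro ⟨y, hxy⟩
    obtain ⟨a, b, hy⟩ := exists_eq_smul_one_add_smul_of_commute x.linearIndependent
      (commute_iff_commute_val.1 hxy).symm
    have hb : b ≠ 0 := by
      rintro rfl
      refine (LinearIndependent.pair_iff' one_ne_zero).1 y.linearIndependent a ?_
      simp [hy]
    have hdet : (a • 1 + b • x.1.val).det ≠ 0 :=
      hy ▸ y.1.isUnit.map detMonoidHom |>.ne_zero
    exact ⟨⟨(a, b), hb, hdet⟩, Subtype.ext (Subtype.ext (Units.ext hy.symm))⟩

theorem coe_commClassEquiv (x : NoncentralGL₂ F) (p) :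
    ((commClassEquiv x p).1.1 : Matrix (Fin 2) (Fin 2) F) = p.1.1 • 1 + p.1.2 • x.1.val :=
  rfl

end GeneralLinear

section Noncentral

variable {F : Type*} [Field F] [Fintype F] [DecidableEq F]

instance (x y : GL (Fin 2) F) : Decidable (Commute x y) :=
  inferInstanceAs (Decidable (x * y = y * x))

instance : DecidableRel (α := NoncentralGL₂ F) (· ≈ ·) :=
  fun x y => inferInstanceAs (Decidable (Commute x.1 y.1))

theorem card_commute (x : NoncentralGL₂ F) :
    Fintype.card {y : NoncentralGL₂ F // Commute x.1 y.1} =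
      (Fintype.card F - eigenvalueCount x.1.val) * (Fintype.card F - 1) := by
  rw [← Fintype.card_congr (commClassEquiv x), card_smul_one_add_smul_det_ne_zero]

theorem card_commute_and (x : NoncentralGL₂ F) (P : Matrix (Fin 2) (Fin 2) F → Prop)
    [DecidablePred P] :
    Fintype.card {y : NoncentralGL₂ F // Commute x.1 y.1 ∧ P y.1.val} =
      Fintype.card {p : F × F // (p.2 ≠ 0 ∧ (p.1 • 1 + p.2 • x.1.val).det ≠ 0) ∧
        P (p.1 • 1 + p.2 • x.1.val)} :=
  (Fintype.card_congr <|
    (Equiv.subtypeSubtypeEquivSubtypeInter (fun p : F × F => p.2 ≠ 0 ∧ _) _).symm.trans <|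
    ((commClassEquiv x).subtypeEquiv (p := fun p => P (p.1.1 • 1 + p.1.2 • x.1.val))
      (q := fun y => P y.1.1.val) fun p => by rw [coe_commClassEquiv]).trans
      (Equiv.subtypeSubtypeEquivSubtypeInter (fun y : NoncentralGL₂ F => Commute x.1 y.1)
        fun y => P y.1.val)).symm

theorem card_commute_trace_det_of_ne (x : NoncentralGL₂ F) {u v : F} (huv : u ≠ v)
    (hu : u ≠ 0) (hv : v ≠ 0) :
    Fintype.card {y : NoncentralGL₂ F // Commute x.1 y.1 ∧
      (y.1.val.trace = u + v ∧ y.1.val.det = u * v)} =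
        if eigenvalueCount x.1.val = 2 then 2 else 0 := by
  split_ifs with hx
  · obtain ⟨l, m, hs, hd⟩ := exists_trace_det_of_eigenvalueCount_pos (hx ▸ two_pos)
    have hlm : l ≠ m := by
      rintro rfl
      simp [eigenvalueCount_of_trace_det hs hd] at hx
    rw [card_commute_and x fun N => N.trace = u + v ∧ N.det = u * v]
    exact card_smul_one_add_smul_trace_det_of_ne hlm hs hd huv hu hv
  · rw [Fintype.card_eq_zero_iff]
    refine ⟨fun ⟨y, hxy, hs, hd⟩ => hx ?_⟩
    rw [← eigenvalueCount_eq_of_commute x.linearIndependent y.linearIndependent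
      (commute_iff_commute_val.1 hxy).symm, eigenvalueCount_of_trace_det hs hd,
      Finset.card_pair huv]

theorem card_commute_trace_det_of_eq (x : NoncentralGL₂ F) {u : F} (hu : u ≠ 0) :
    Fintype.card {y : NoncentralGL₂ F // Commute x.1 y.1 ∧
      (y.1.val.trace = u + u ∧ y.1.val.det = u * u)} =
        if eigenvalueCount x.1.val = 1 then Fintype.card F - 1 else 0 := by
  split_ifs with hx
  · obtain ⟨l, m, hs, hd⟩ := exists_trace_det_of_eigenvalueCount_pos (hx ▸ one_pos)
    obtain rfl : l = m := by
      by_contra hlm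
      rw [eigenvalueCount_of_trace_det hs hd, Finset.card_pair hlm] at hx
      exact absurd hx (by norm_num)
    rw [card_commute_and x fun N => N.trace = u + u ∧ N.det = u * u]
    exact card_smul_one_add_smul_trace_det_of_eq hs hd hu
  · rw [Fintype.card_eq_zero_iff]
    refine ⟨fun ⟨y, hxy, hs, hd⟩ => hx ?_⟩
    rw [← eigenvalueCount_eq_of_commute x.linearIndependent y.linearIndependent
      (commute_iff_commute_val.1 hxy).symm, eigenvalueCount_of_trace_det hs hd,
      Finset.pair_eq_singleton, Finset.card_singleton]

def noncentralEquiv (P : Matrix (Fin 2) (Fin 2) F → Prop) (hP : ∀ N, P N → N.det ≠ 0) :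
    {y : NoncentralGL₂ F // P y.1.val} ≃
      {N : {N : Matrix (Fin 2) (Fin 2) F // P N} // LinearIndependent F ![1, N.1]} where
  toFun y := ⟨⟨y.1.1.val, y.2⟩, y.1.linearIndependent⟩
  invFun N := ⟨⟨GeneralLinearGroup.mkOfDetNeZero N.1.1 (hP _ N.1.2),
    (notMem_center_iff_linearIndependent _).2 N.2⟩, N.1.2⟩
  left_inv _ := Subtype.ext (Subtype.ext (Units.ext rfl))
  right_inv _ := rfl

theorem card_noncentral_trace_det_of_ne {u v : F} (huv : u ≠ v) (hu : u ≠ 0) (hv : v ≠ 0) :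
    Fintype.card {y : NoncentralGL₂ F // y.1.val.trace = u + v ∧ y.1.val.det = u * v} =
      Fintype.card F * (Fintype.card F - 1) + Fintype.card F * 2 := by
  have hli : ∀ N : {N : Matrix (Fin 2) (Fin 2) F // N.trace = u + v ∧ N.det = u * v},
      LinearIndependent F ![1, N.1] := by
    rintro ⟨N, hs, hd⟩
    refine (LinearIndependent.pair_iff' one_ne_zero).2 fun c (hc : c • 1 = N) => huv ?_
    subst hc
    obtain ⟨rfl, rfl⟩ := eq_of_smul_one_trace_det hs hd
    rfl
  rw [Fintype.card_congr ((noncentralEquiv _ fun N h => h.2 ▸ mul_ne_zero hu hv).trans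
    (Equiv.subtypeUnivEquiv hli)), card_trace_det_eq, quadRoots_add_mul, Finset.card_pair huv]

theorem card_noncentral_trace_det_of_eq {u : F} (hu : u ≠ 0) :
    Fintype.card {y : NoncentralGL₂ F // y.1.val.trace = u + u ∧ y.1.val.det = u * u} + 1 =
      Fintype.card F * (Fintype.card F - 1) + Fintype.card F * 1 := by
  classical
  have hscalar := trace_det_smul_one u
  have hli : ∀ N : {N : Matrix (Fin 2) (Fin 2) F // N.trace = u + u ∧ N.det = u * u},
      LinearIndependent F ![1, N.1] ↔ N ≠ ⟨u • 1, hscalar⟩ := by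
    rintro ⟨N, hs, hd⟩
    rw [LinearIndependent.pair_iff' one_ne_zero, Ne, Subtype.mk.injEq]
    constructor
    · exact fun h hN => h u hN.symm
    · rintro h c rfl
      obtain ⟨rfl, -⟩ := eq_of_smul_one_trace_det hs hd
      exact h rfl
  rw [Fintype.card_congr ((noncentralEquiv _ fun N h => h.2 ▸ mul_ne_zero hu hu).trans
    (Equiv.subtypeEquivRight hli)), Fintype.card_subtype_compl, Fintype.card_subtype_eq,
    card_trace_det_eq, quadRoots_add_mul, Finset.pair_eq_singleton, Finset.card_singleton]
  exact Nat.sub_add_cancel (Nat.le_add_left _ _ |>.trans' (by rw [mul_one]; exact Fintype.card_pos))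

theorem card_center_GL_two : Nat.card (Subgroup.center (GL (Fin 2) F)) = Fintype.card F - 1 := by
  have hinj : Function.Injective (GeneralLinearGroup.scalar (Fin 2) (R := F)) := fun a b h => by
    have := congrArg (fun g : GL (Fin 2) F => g.val 0 0) h
    exact Units.ext (by simpa using this)
  rw [GeneralLinearGroup.center_eq_range_scalar,
    ← Nat.card_congr (MonoidHom.ofInjective hinj).toEquiv,
    Nat.card_eq_fintype_card, Fintype.card_units]

theorem card_noncentral_add_sub_one :
    Fintype.card (NoncentralGL₂ F) + (Fintype.card F - 1) =
      (Fintype.card F ^ 2 - 1) * (Fintype.card F ^ 2 - Fintype.card F) := by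
  rw [← card_center_GL_two, Nat.card_eq_fintype_card, Fintype.card_subtype_compl,
    Nat.sub_add_cancel (Fintype.card_subtype_le _), ← Nat.card_eq_fintype_card,
    Matrix.card_GL_field, Fin.prod_univ_two]
  simp

def classEigenvalueCount : Quotient (commuteSetoid F) → ℕ :=
  Quotient.lift (fun x => eigenvalueCount x.1.val) fun x y h =>
    (eigenvalueCount_eq_of_commute x.linearIndependent y.linearIndependent
      (commute_iff_commute_val.1 h).symm).symm

theorem classEigenvalueCount_le_two (c : Quotient (commuteSetoid F)) :
    classEigenvalueCount c ≤ 2 := by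
  induction c using Quotient.ind
  exact card_quadRoots_le_two _ _

theorem card_class {n : ℕ} (c : {c : Quotient (commuteSetoid F) // classEigenvalueCount c = n}) :
    Fintype.card {y : NoncentralGL₂ F // ⟦y⟧ = c.1} =
      (Fintype.card F - n) * (Fintype.card F - 1) := by
  obtain ⟨c, rfl⟩ := c
  induction c using Quotient.ind with | _ x => ?_
  exact (Fintype.card_congr <| Equiv.subtypeEquivRight fun _ =>
    Quotient.eq.trans ⟨Commute.symm, Commute.symm⟩).trans (card_commute x)

theorem card_mk_eq_and (x : NoncentralGL₂ F) (P : NoncentralGL₂ F → Prop) [DecidablePred P] :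
    Fintype.card {y // Quotient.mk (commuteSetoid F) y = Quotient.mk _ x ∧ P y} =
      Fintype.card {y : NoncentralGL₂ F // Commute x.1 y.1 ∧ P y} :=
  Fintype.card_congr <| Equiv.subtypeEquivRight fun _ =>
    and_congr_left' (Quotient.eq.trans ⟨Commute.symm, Commute.symm⟩)

theorem sum_classEigenvalueCount (g : ℕ → ℕ) :
    ∑ c, g (classEigenvalueCount (F := F) c) =
      Fintype.card {c // classEigenvalueCount (F := F) c = 0} * g 0 +
        Fintype.card {c // classEigenvalueCount (F := F) c = 1} * g 1 +
          Fintype.card {c // classEigenvalueCount (F := F) c = 2} * g 2 := by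
  rw [← Finset.sum_fiberwise_of_maps_to (g := classEigenvalueCount) (t := Finset.range 3)
    fun c _ => Finset.mem_range.2 (Nat.lt_succ_of_le (classEigenvalueCount_le_two c))]
  simp only [Finset.sum_range_succ, Finset.sum_range_zero, zero_add, Fintype.card_subtype]
  congr 2 <;> rw [Finset.sum_congr rfl fun c hc => by rw [(Finset.mem_filter.1 hc).2],
    Finset.sum_const, smul_eq_mul]

theorem card_noncentral_eq_sum :
    Fintype.card (NoncentralGL₂ F) =
      Fintype.card {c // classEigenvalueCount (F := F) c = 0} *
          (Fintype.card F * (Fintype.card F - 1)) +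
        Fintype.card {c // classEigenvalueCount (F := F) c = 1} *
          ((Fintype.card F - 1) * (Fintype.card F - 1)) +
        Fintype.card {c // classEigenvalueCount (F := F) c = 2} *
          ((Fintype.card F - 2) * (Fintype.card F - 1)) := by
  calc Fintype.card (NoncentralGL₂ F)
      = ∑ c, (Fintype.card F - classEigenvalueCount c) * (Fintype.card F - 1) := by
        rw [Fintype.card_eq_sum_card_fiber (Quotient.mk (commuteSetoid F))]
        exact Finset.sum_congr rfl fun c _ => card_class ⟨c, rfl⟩
    _ = _ := by
        rw [sum_classEigenvalueCount fun n => (Fintype.card F - n) * (Fintype.card F - 1),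
          Nat.sub_zero]

theorem card_classEigenvalueCount_two_mul {u v : F} (huv : u ≠ v) (hu : u ≠ 0) (hv : v ≠ 0) :
    Fintype.card {c // classEigenvalueCount (F := F) c = 2} * 2 =
      Fintype.card F * (Fintype.card F - 1) + Fintype.card F * 2 := by
  have hfiber : ∀ c, Fintype.card {y : NoncentralGL₂ F // Quotient.mk _ y = c ∧
      (y.1.val.trace = u + v ∧ y.1.val.det = u * v)} =
        if classEigenvalueCount c = 2 then 2 else 0 :=
    Quotient.ind fun x => (card_mk_eq_and x _).trans (card_commute_trace_det_of_ne x huv hu hv)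
  rw [← card_noncentral_trace_det_of_ne huv hu hv,
    Fintype.card_subtype_eq_sum_card_fiber (Quotient.mk (commuteSetoid F))]
  simp only [hfiber]
  rw [sum_classEigenvalueCount fun n => if n = 2 then 2 else 0]
  simp

theorem card_classEigenvalueCount_one_mul {u : F} (hu : u ≠ 0) :
    Fintype.card {c // classEigenvalueCount (F := F) c = 1} * (Fintype.card F - 1) + 1 =
      Fintype.card F * (Fintype.card F - 1) + Fintype.card F * 1 := by
  have hfiber : ∀ c, Fintype.card {y : NoncentralGL₂ F // Quotient.mk _ y = c ∧
      (y.1.val.trace = u + u ∧ y.1.val.det = u * u)} =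
        if classEigenvalueCount c = 1 then Fintype.card F - 1 else 0 :=
    Quotient.ind fun x => (card_mk_eq_and x _).trans (card_commute_trace_det_of_eq x hu)
  rw [← card_noncentral_trace_det_of_eq hu,
    Fintype.card_subtype_eq_sum_card_fiber (Quotient.mk (commuteSetoid F))]
  simp only [hfiber]
  rw [sum_classEigenvalueCount fun n => if n = 1 then Fintype.card F - 1 else 0]
  simp

theorem card_classEigenvalueCount_two (hq : 2 < Fintype.card F) :
    Fintype.card {c // classEigenvalueCount (F := F) c = 2} =
      Fintype.card F * (Fintype.card F + 1) / 2 := by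
  obtain ⟨c, hc0, hc1⟩ := exists_ne_zero_ne_one hq
  have h := card_classEigenvalueCount_two_mul (Ne.symm hc1) one_ne_zero hc0
  obtain ⟨n, hn⟩ : ∃ n, Fintype.card F = n + 1 :=
    ⟨_, (Nat.succ_pred_eq_of_pos Fintype.card_pos).symm⟩
  rw [hn, Nat.add_sub_cancel] at h
  rw [hn, Nat.div_eq_of_eq_mul_left two_pos (by rw [h]; ring)]

theorem card_classEigenvalueCount_one :
    Fintype.card {c // classEigenvalueCount (F := F) c = 1} = Fintype.card F + 1 := by
  have h := card_classEigenvalueCount_one_mul (one_ne_zero (α := F))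
  obtain ⟨n, hn⟩ : ∃ n, Fintype.card F = n + 2 :=
    ⟨_, (Nat.sub_add_cancel Fintype.one_lt_card).symm⟩
  rw [hn, show n + 2 - 1 = n + 1 from rfl] at h
  rw [hn]
  refine Nat.eq_of_mul_eq_mul_right (Nat.succ_pos n) ?_
  linarith

theorem card_classEigenvalueCount_zero (hq : 2 < Fintype.card F) :
    Fintype.card {c // classEigenvalueCount (F := F) c = 0} =
      Fintype.card F * (Fintype.card F - 1) / 2 := by
  obtain ⟨c, hc0, hc1⟩ := exists_ne_zero_ne_one hq
  have h₂ := card_classEigenvalueCount_two_mul (Ne.symm hc1) one_ne_zero hc0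
  have h₁ := card_classEigenvalueCount_one (F := F)
  have htot := card_noncentral_eq_sum (F := F) ▸ card_noncentral_add_sub_one (F := F)
  obtain ⟨n, hn⟩ : ∃ n, Fintype.card F = n + 3 := ⟨_, (Nat.sub_add_cancel hq).symm⟩
  rw [hn] at h₂ h₁ htot ⊢
  rw [show n + 3 - 1 = n + 2 from rfl, show n + 3 - 2 = n + 1 from rfl,
    show (n + 3) ^ 2 - 1 = (n + 2) * (n + 4) by ring_nf; omega,
    show (n + 3) ^ 2 - (n + 3) = (n + 3) * (n + 2) by ring_nf; omega, h₁] at htot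
  rw [show n + 3 - 1 = n + 2 from rfl] at h₂ ⊢
  refine Nat.div_eq_of_eq_mul_left two_pos (Nat.eq_of_mul_eq_mul_right
    (show 0 < (n + 3) * (n + 2) by positivity) ?_) |>.symm
  zify at htot h₂ ⊢
  linear_combination (-2) * htot + ((n : ℤ) + 1) * (n + 2) * h₂

end Noncentral

/-- For a prime power `q > 2`, the commuting graph of `GL(2, q)` is isomorphic to
`(q(q+1)/2)·K_{q²-3q+2} ⊔ (q(q-1)/2)·K_{q²-q} ⊔ (q+1)·K_{q²-2q+1}`. -/
theorem commGraph_GL_two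
    (F : Type*) [Field F] [Fintype F] [DecidableEq F] (hq : 2 < Fintype.card F) :
    Nonempty (commGraph (Matrix.GeneralLinearGroup (Fin 2) F) ≃g
      (completeUnion (Fintype.card F * (Fintype.card F + 1) / 2)
          (Fintype.card F ^ 2 - 3 * Fintype.card F + 2)
        ⊕g completeUnion (Fintype.card F * (Fintype.card F - 1) / 2)
          (Fintype.card F ^ 2 - Fintype.card F)
        ⊕g completeUnion (Fintype.card F + 1)
          (Fintype.card F ^ 2 - 2 * Fintype.card F + 1))) := by
  let e := (equivSumOfLeTwo _ classEigenvalueCount_le_two).trans <| Equiv.sumCongr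
    (Equiv.sumCongr (Fintype.equivFinOfCardEq (card_classEigenvalueCount_two hq))
      (Fintype.equivFinOfCardEq (card_classEigenvalueCount_zero hq)))
    (Fintype.equivFinOfCardEq card_classEigenvalueCount_one)
  obtain ⟨n, hn⟩ : ∃ n, Fintype.card F = n + 3 := ⟨_, (Nat.sub_add_cancel hq).symm⟩
  refine (commGraph_isClusteredBy.comp_equiv e).nonempty_iso
    (((completeUnion_isClusteredBy _ _).sum (completeUnion_isClusteredBy _ _)).sum
      (completeUnion_isClusteredBy _ _)) ?_
  rintro ((i | i) | i) <;>
    simp only [Fintype.card_fiber_equiv_comp, Fintype.card_fiber_sumMap_inl,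
      Fintype.card_fiber_sumMap_inr, Fintype.card_fiber_fst, Fintype.card_fin, e,
      Equiv.symm_trans_apply, Equiv.sumCongr_symm, Equiv.sumCongr_apply, Sum.map_inl, Sum.map_inr,
      equivSumOfLeTwo_symm_inl_inl, equivSumOfLeTwo_symm_inl_inr, equivSumOfLeTwo_symm_inr,
      card_class, hn, Nat.reduceSubDiff, Nat.sub_zero] <;>
    ring_nf <;> omega
end

section
/- Let D_{2m} = ⟨a, b : a^m = b^2 = 1, bab^{-1} = a^{-1}⟩ with m > 2 even. Then the commuting graph of D_{2m} is isomorphic to K_{m-2} ⊔ (m/2)·K_2, and its spectrum is {(-1) with multiplicity 3m/2 - 3, 1 with multiplicity m/2, (m - 3) with multiplicity 1}. -/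
open Polynomial

/-!
Write `m = 2n`. The centre of `D_{2m}` is `{r 0, r n}`, and among the remaining elements
commuting is an equivalence relation: all non-central rotations commute with each other, no
rotation `r i` with `2i ≠ 0` commutes with a reflection, and `sr i` commutes with `sr j` exactly
when `2(j - i) = 0`, i.e. `j ∈ {i, i + n}`. So the commuting graph is a disjoint union of cliques,
one on the `m - 2` non-central rotations and `n` edges `{sr j, sr (j + n)}`, and such a graph is
determined up to isomorphism by its clique sizes. The adjacency matrix of `K_p` is `J - I` with
`J` the all-ones matrix of rank one, so its characteristic polynomial is
`(X + 1)^(p - 1) (X - (p - 1))`; the spectrum multiplies over the blocks.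
-/

namespace ZMod

theorem cast_eq_zero_iff_dvd_val {m n : ℕ} [NeZero m] (x : ZMod m) :
    (x.cast : ZMod n) = 0 ↔ n ∣ x.val := by
  rw [cast_eq_val, natCast_eq_zero_iff]

variable {n : ℕ} [NeZero n]

theorem add_self_eq_zero_iff_dvd_val (x : ZMod (2 * n)) : x + x = 0 ↔ n ∣ x.val := by
  have : x + x = ((2 * x.val : ℕ) : ZMod (2 * n)) := by push_cast [natCast_zmod_val]; ring
  rw [this, natCast_eq_zero_iff, Nat.mul_dvd_mul_iff_left two_pos]

theorem eq_zero_or_eq_iff_dvd_val (x : ZMod (2 * n)) : x = 0 ∨ x = n ↔ n ∣ x.val := by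
  have hn := NeZero.pos n
  have hval : (n : ZMod (2 * n)).val = n := val_natCast_of_lt (by omega)
  rw [← val_eq_zero, ← (val_injective _).eq_iff, hval]
  have := x.val_lt
  constructor
  · rintro (h | h) <;> simp [h]
  · rintro ⟨c, hc⟩
    have : c < 2 := by nlinarith
    interval_cases c <;> simp_all

theorem natCast_ne_zero_of_two_mul : (n : ZMod (2 * n)) ≠ 0 := by
  have hn := NeZero.pos n
  rw [Ne, natCast_eq_zero_iff]
  exact Nat.not_dvd_of_pos_of_lt hn (by omega)

theorem ncard_setOf_cast_eq (c : ZMod n) :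
    {x : ZMod (2 * n) | (x.cast : ZMod n) = c}.ncard = 2 := by
  set x₀ : ZMod (2 * n) := (c.val : ZMod (2 * n))
  have hx₀ : (x₀.cast : ZMod n) = c := by
    rw [cast_natCast (dvd_mul_left n 2), natCast_zmod_val]
  have : {x : ZMod (2 * n) | (x.cast : ZMod n) = c} = {x₀, x₀ + n} := by
    ext x
    rw [Set.mem_ofPred_eq, ← hx₀, ← sub_eq_zero, ← cast_sub (dvd_mul_left n 2),
      cast_eq_zero_iff_dvd_val, ← eq_zero_or_eq_iff_dvd_val, sub_eq_zero, sub_eq_iff_eq_add']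
    simp [add_comm]
  rw [this, Set.ncard_pair (by simpa using natCast_ne_zero_of_two_mul (n := n))]

end ZMod

theorem commGraph_adj {G : Type*} [Group G] {x y : {g : G // g ∉ Subgroup.center G}} :
    (commGraph G).Adj x y ↔ x ≠ y ∧ Commute x.1 y.1 :=
  Iff.rfl

namespace DihedralGroup

variable {m : ℕ}

theorem commute_r_r (i j : ZMod m) : Commute (r i) (r j) := by
  simp [Commute, SemiconjBy, r_mul_r, add_comm]

theorem commute_r_sr_iff (i j : ZMod m) : Commute (r i) (sr j) ↔ i + i = 0 := by
  rw [Commute, SemiconjBy, r_mul_sr, sr_mul_r, sr.injEq, sub_eq_add_neg, add_right_inj,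
    neg_eq_iff_add_eq_zero]

theorem commute_sr_sr_iff (i j : ZMod m) :
    Commute (sr i) (sr j) ↔ (j - i) + (j - i) = 0 := by
  rw [Commute, SemiconjBy, sr_mul_sr, sr_mul_sr, r.injEq]
  constructor <;> intro h <;> linear_combination h

theorem r_mem_center_iff (i : ZMod m) :
    r i ∈ Subgroup.center (DihedralGroup m) ↔ i + i = 0 := by
  rw [Subgroup.mem_center_iff]
  refine ⟨fun h => (commute_r_sr_iff i 0).mp (h (sr 0)).symm, fun h g => ?_⟩
  rcases g with j | j
  · exact (commute_r_r i j).symm.eq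
  · exact ((commute_r_sr_iff i j).mpr h).symm.eq

theorem sr_mem_center_iff (i : ZMod m) :
    sr i ∈ Subgroup.center (DihedralGroup m) ↔ (2 : ZMod m) = 0 := by
  rw [Subgroup.mem_center_iff]
  refine ⟨fun h => ?_, fun h g => ?_⟩
  · simpa [one_add_one_eq_two] using (commute_r_sr_iff 1 i).mp (h (r 1))
  · rcases g with j | j
    · exact (commute_r_sr_iff j i).mpr (by rw [← two_mul, h, zero_mul])
    · exact (commute_sr_sr_iff j i).mpr (by rw [← two_mul, h, zero_mul])

end DihedralGroup

namespace SimpleGraph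

theorem nonempty_iso_of_adj_iff_label_eq {V W K L : Type*} [Finite V] [Finite W]
    {G : SimpleGraph V} {H : SimpleGraph W} {f : V → K} {g : W → L} (σ : K ≃ L)
    (hG : ∀ x y, G.Adj x y ↔ x ≠ y ∧ f x = f y) (hH : ∀ x y, H.Adj x y ↔ x ≠ y ∧ g x = g y)
    (hcard : ∀ k, Nat.card {x // f x = k} = Nat.card {y // g y = σ k}) :
    Nonempty (G ≃g H) := by
  have e k : {x // f x = k} ≃ {y // g y = σ k} := (Finite.card_eq.mp (hcard k)).some
  let φ : V ≃ W := (Equiv.sigmaFiberEquiv f).symm.trans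
    ((Equiv.sigmaCongr σ e).trans (Equiv.sigmaFiberEquiv g))
  have hφ x : g (φ x) = σ (f x) := (e (f x) ⟨x, rfl⟩).2
  refine ⟨⟨φ, fun {x y} => ?_⟩⟩
  rw [hG, hH, hφ, hφ, φ.injective.ne_iff, σ.injective.eq_iff]

end SimpleGraph

@[simp]
theorem completeUnion_adj {k p : ℕ} {x y : Fin k × Fin p} :
    (completeUnion k p).Adj x y ↔ x ≠ y ∧ x.1 = y.1 :=
  Iff.rfl

instance (k p : ℕ) : DecidableRel (completeUnion k p).Adj :=
  fun x y => inferInstanceAs (Decidable (x ≠ y ∧ x.1 = y.1))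

section CliqueUnion

variable {p k q : ℕ}

def cliqueLabel : Fin p ⊕ Fin k × Fin q → Option (Fin k) :=
  Sum.elim (fun _ => none) (fun x => some x.1)

theorem top_sum_completeUnion_adj_iff (x y : Fin p ⊕ Fin k × Fin q) :
    ((⊤ : SimpleGraph (Fin p)) ⊕g completeUnion k q).Adj x y ↔
      x ≠ y ∧ cliqueLabel x = cliqueLabel y := by
  rcases x with x | x <;> rcases y with y | y <;> simp [cliqueLabel]

theorem card_cliqueLabel_eq_none :
    Nat.card {x : Fin p ⊕ Fin k × Fin q // cliqueLabel x = none} = p := by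
  have : {x : Fin p ⊕ Fin k × Fin q | cliqueLabel x = none} = Set.range Sum.inl := by
    ext (x | x) <;> simp [cliqueLabel]
  calc _ = (Set.range (Sum.inl : Fin p → Fin p ⊕ Fin k × Fin q)).ncard := by
        rw [← this]; rfl
    _ = p := by rw [Set.ncard_range_of_injective Sum.inl_injective, Nat.card_fin]

theorem card_cliqueLabel_eq_some (a : Fin k) :
    Nat.card {x : Fin p ⊕ Fin k × Fin q // cliqueLabel x = some a} = q := by
  let ι (b : Fin q) : Fin p ⊕ Fin k × Fin q := .inr (a, b)
  have : {x | cliqueLabel x = some a} = Set.range ι := by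
    ext (x | x) <;> simp [ι, cliqueLabel, eq_comm, Prod.ext_iff]
  calc _ = (Set.range ι).ncard := by rw [← this]; rfl
    _ = q := by
      rw [Set.ncard_range_of_injective (fun b b' h => by simpa [ι] using h), Nat.card_fin]

end CliqueUnion

namespace DihedralGroup

variable {n : ℕ} [NeZero n]

def commLabel : DihedralGroup (2 * n) → Option (ZMod n)
  | r _ => none
  | sr j => some j.cast

theorem commGraph_adj_iff (x y : {g : DihedralGroup (2 * n) // g ∉ Subgroup.center _}) :
    (commGraph (DihedralGroup (2 * n))).Adj x y ↔ x ≠ y ∧ commLabel x.1 = commLabel y.1 := by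
  rw [commGraph_adj]
  obtain ⟨x | x, hx⟩ := x <;> obtain ⟨y | y, hy⟩ := y
  · simp [commLabel, commute_r_r]
  · rw [r_mem_center_iff] at hx
    simp [commLabel, commute_r_sr_iff, hx]
  · rw [r_mem_center_iff] at hy
    simp [commLabel, Commute.symm_iff (a := sr x), commute_r_sr_iff, hy]
  · simp only [commLabel, Option.some.injEq]
    rw [commute_sr_sr_iff, ZMod.add_self_eq_zero_iff_dvd_val, ← ZMod.cast_eq_zero_iff_dvd_val,
      ZMod.cast_sub (dvd_mul_left n 2), sub_eq_zero, eq_comm (a := y.cast)]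

theorem card_commLabel_eq_none :
    Nat.card {x : {g : DihedralGroup (2 * n) // g ∉ Subgroup.center _} //
      commLabel x.1 = none} = 2 * n - 2 := by
  have : {g : DihedralGroup (2 * n) | g ∉ Subgroup.center _ ∧ commLabel g = none} =
      r '' {i | (i.cast : ZMod n) = 0}ᶜ := by
    ext (i | j) <;> simp [commLabel, r_mem_center_iff, ZMod.add_self_eq_zero_iff_dvd_val,
      ZMod.cast_eq_zero_iff_dvd_val]
  calc _ = (r '' {i : ZMod (2 * n) | (i.cast : ZMod n) = 0}ᶜ).ncard := by
        rw [← this]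
        exact Nat.card_congr (Equiv.subtypeSubtypeEquivSubtypeInter _ (commLabel · = none))
    _ = 2 * n - 2 := by
      rw [Set.ncard_image_of_injective _ (fun _ _ => r.inj), Set.ncard_compl,
        ZMod.ncard_setOf_cast_eq, Nat.card_zmod]

theorem card_commLabel_eq_some (hn : 2 ≤ n) (c : ZMod n) :
    Nat.card {x : {g : DihedralGroup (2 * n) // g ∉ Subgroup.center _} //
      commLabel x.1 = some c} = 2 := by
  have h2 : (2 : ZMod (2 * n)) ≠ 0 := by
    have : ((2 : ℕ) : ZMod (2 * n)) ≠ 0 := by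
      rw [Ne, ZMod.natCast_eq_zero_iff]
      exact Nat.not_dvd_of_pos_of_lt two_pos (by omega)
    exact_mod_cast this
  have : {g : DihedralGroup (2 * n) | g ∉ Subgroup.center _ ∧ commLabel g = some c} =
      sr '' {j | (j.cast : ZMod n) = c} := by
    ext (i | j) <;> simp [commLabel, sr_mem_center_iff, h2]
  calc _ = (sr '' {j : ZMod (2 * n) | (j.cast : ZMod n) = c}).ncard := by
        rw [← this]
        exact Nat.card_congr (Equiv.subtypeSubtypeEquivSubtypeInter _ (commLabel · = some c))
    _ = 2 := by
      rw [Set.ncard_image_of_injective _ (fun _ _ => sr.inj), ZMod.ncard_setOf_cast_eq]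

end DihedralGroup

open Matrix

namespace Matrix

variable {R ι n : Type*} [CommRing R] [Fintype ι] [DecidableEq ι] [Fintype n] [DecidableEq n]

theorem charpoly_blockDiagonal (M : ι → Matrix n n R) :
    (blockDiagonal M).charpoly = ∏ i, (M i).charpoly := by
  have : (blockDiagonal M).charmatrix = blockDiagonal fun i => (M i).charmatrix := by
    ext ⟨a, i⟩ ⟨b, j⟩
    obtain rfl | hij := eq_or_ne i j
    · obtain rfl | hab := eq_or_ne a b <;> simp [blockDiagonal_apply, *]
    · simp [blockDiagonal_apply, hij]
  rw [charpoly, this, det_blockDiagonal]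
  rfl

end Matrix

namespace SimpleGraph

variable {R : Type*} [CommRing R]

theorem charpoly_adjMatrix_top {V : Type*} [Fintype V] [DecidableEq V] [Nonempty V] :
    ((⊤ : SimpleGraph V).adjMatrix R).charpoly =
      (X + 1) ^ (Fintype.card V - 1) * (X - C ((Fintype.card V : R) - 1)) := by
  have hJ : (⊤ : SimpleGraph V).adjMatrix R = vecMulVec 1 1 - scalar V 1 := by
    ext i j; by_cases h : i = j <;> simp [h]
  rw [hJ, charpoly_sub_scalar, charpoly_vecMulVec, one_dotProduct_one, smul_eq_C_mul]
  obtain ⟨k, hk⟩ : ∃ k, Fintype.card V = k + 1 :=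
    Nat.exists_eq_succ_of_ne_zero Fintype.card_ne_zero
  simp only [hk, add_tsub_cancel_right, Nat.cast_succ, add_sub_cancel_right, map_add, map_one,
    sub_comp, add_comp, mul_comp, pow_comp, X_comp, C_comp, one_comp]
  ring

theorem charpoly_adjMatrix_sum {V W : Type*} [Fintype V] [DecidableEq V] [Fintype W]
    [DecidableEq W] (G : SimpleGraph V) (H : SimpleGraph W) [DecidableRel G.Adj]
    [DecidableRel H.Adj] [DecidableRel (G ⊕g H).Adj] :
    ((G ⊕g H).adjMatrix R).charpoly = (G.adjMatrix R).charpoly * (H.adjMatrix R).charpoly := by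
  have : (G ⊕g H).adjMatrix R = fromBlocks (G.adjMatrix R) 0 0 (H.adjMatrix R) := by
    ext (v | w) (v' | w') <;> simp [fromBlocks, adjMatrix_apply]
  rw [this, charpoly_fromBlocks_zero₁₂]

theorem Iso.charpoly_adjMatrix_eq {V W : Type*} [Fintype V] [DecidableEq V] [Fintype W]
    [DecidableEq W] {G : SimpleGraph V} {H : SimpleGraph W} [DecidableRel G.Adj]
    [DecidableRel H.Adj] (e : G ≃g H) :
    (G.adjMatrix R).charpoly = (H.adjMatrix R).charpoly := by
  rw [← e.reindex_adjMatrix (α := R), charpoly_reindex]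

end SimpleGraph

theorem adjMatrix_completeUnion {R : Type*} [CommRing R] (k p : ℕ) :
    (completeUnion k p).adjMatrix R = reindex (Equiv.prodComm _ _) (Equiv.prodComm _ _)
      (blockDiagonal fun _ : Fin k => (⊤ : SimpleGraph (Fin p)).adjMatrix R) := by
  ext ⟨a, b⟩ ⟨c, d⟩
  by_cases hac : a = c
  · subst hac
    by_cases hbd : b = d <;> simp [SimpleGraph.adjMatrix_apply, blockDiagonal_apply, hbd]
  · simp [SimpleGraph.adjMatrix_apply, blockDiagonal_apply, hac]

theorem charpoly_adjMatrix_completeUnion {R : Type*} [CommRing R] (k p : ℕ) [NeZero p] :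
    ((completeUnion k p).adjMatrix R).charpoly =
      ((X + 1) ^ (p - 1) * (X - C ((p : R) - 1))) ^ k := by
  rw [adjMatrix_completeUnion, charpoly_reindex, charpoly_blockDiagonal,
    SimpleGraph.charpoly_adjMatrix_top, Finset.prod_const, Finset.card_univ, Fintype.card_fin,
    Fintype.card_fin]

theorem commCharpoly_eq_of_iso {G V : Type*} [Group G] [Finite G] [Fintype V] [DecidableEq V]
    {H : SimpleGraph V} [DecidableRel H.Adj] (e : commGraph G ≃g H) :
    commCharpoly G = (H.adjMatrix ℝ).charpoly := by
  classical
  have := Fintype.ofFinite G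
  rw [commCharpoly, ← e.charpoly_adjMatrix_eq]
  congr!

theorem DihedralGroup.nonempty_commGraph_iso {n : ℕ} [NeZero n] (hn : 2 ≤ n) :
    Nonempty (commGraph (DihedralGroup (2 * n)) ≃g
      ((⊤ : SimpleGraph (Fin (2 * n - 2))) ⊕g completeUnion n 2)) := by
  refine SimpleGraph.nonempty_iso_of_adj_iff_label_eq
    (Equiv.optionCongr (ZMod.finEquiv n).symm.toEquiv) commGraph_adj_iff
    top_sum_completeUnion_adj_iff ?_
  rintro (_ | c)
  · rw [card_commLabel_eq_none]
    exact card_cliqueLabel_eq_none.symm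
  · rw [card_commLabel_eq_some hn]
    exact (card_cliqueLabel_eq_some _).symm

/-- For `m > 2` even, the commuting graph of the dihedral group `D_{2m}` is isomorphic
to `K_{m-2} ⊔ (m/2)·K_2`, and its spectrum is `{(-1)^{3m/2-3}, 1^{m/2}, (m-3)^1}`. -/
theorem commGraph_dihedral_even (m : ℕ) (hm : 2 < m) (heven : Even m) :
    haveI : NeZero m := ⟨by omega⟩
    Nonempty (commGraph (DihedralGroup m) ≃g
        ((⊤ : SimpleGraph (Fin (m - 2))) ⊕g completeUnion (m / 2) 2)) ∧
      commCharpoly (DihedralGroup m) =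
        (X + 1) ^ (3 * m / 2 - 3) * (X - 1) ^ (m / 2) * (X - C ((m : ℝ) - 3)) := by
  classical
  obtain ⟨n, rfl⟩ := heven.two_dvd
  have hn : 2 ≤ n := by omega
  have : NeZero n := ⟨by omega⟩
  obtain ⟨e⟩ := DihedralGroup.nonempty_commGraph_iso hn
  rw [Nat.mul_div_cancel_left n two_pos]
  refine ⟨⟨e⟩, ?_⟩
  have : NeZero (2 * n - 2) := ⟨by omega⟩
  have hC : ((2 * n - 2 : ℕ) : ℝ) - 1 = ((2 * n : ℕ) : ℝ) - 3 := by
    rw [Nat.cast_sub (by omega)]; ring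
  rw [commCharpoly_eq_of_iso e, SimpleGraph.charpoly_adjMatrix_sum,
    SimpleGraph.charpoly_adjMatrix_top, charpoly_adjMatrix_completeUnion, Fintype.card_fin, hC,
    show 3 * (2 * n) / 2 - 3 = (2 * n - 2 - 1) + n by omega, mul_pow, pow_add]
  norm_num
  ring
end
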